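/- Fix s ≥ 1. Then lim_{δ→0+} δ·Σ_{k=0}^∞ (1/s)·max(0, 1 − e^{(2k+1)δ}/s) = (1/2)·(ln s)/s − (1/(2s))·(1 − 1/s). -/

import Mathlib

/-!
The summand is the value at the midpoint `(k + 1/2)δ` of the antitone profile
`f x = (1/s)·(1 − e^{2x}/s)⁺`, which vanishes beyond `L = (log s)/2`. For antitone `f`, the term
`δ·f((k+1/2)δ)` lies between the integrals of `f` over the neighbouring cells
`[(k+1/2)δ, (k+3/2)δ]` and `[(k−1/2)δ, (k+1/2)δ]`, so `δ·∑ f((k+1/2)δ)` is squeezed between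
`∫_{δ/2}^{L} f` and `∫_{−δ/2}^{L} f`, both of which tend to `∫_0^L f` as `δ → 0+`.
-/

open Real Filter Set

open intervalIntegral Finset Topology

section MidpointSum

variable {f : ℝ → ℝ} {δ L : ℝ}

theorem Antitone.integral_le_midpoint_sum (hf : Antitone f) (hδ : 0 < δ) (N : ℕ) :
    ∫ x in δ / 2..(N + 1 / 2) * δ, f x ≤ δ * ∑ k ∈ range N, f ((k + 1 / 2) * δ) := by
  have hg : Antitone fun u => f (u * δ) := hf.comp_monotone (monotone_mul_right_of_nonneg hδ.le)
  have h := (hg.antitoneOn (Icc (1 / 2) (1 / 2 + N))).integral_le_sum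
  rw [integral_comp_mul_right f hδ.ne', smul_eq_mul] at h
  calc ∫ x in δ / 2..(N + 1 / 2) * δ, f x
      = δ * (δ⁻¹ * ∫ x in 1 / 2 * δ..(1 / 2 + N) * δ, f x) := by
        rw [mul_inv_cancel_left₀ hδ.ne']; ring_nf
    _ ≤ δ * ∑ k ∈ range N, f ((1 / 2 + k) * δ) := by gcongr
    _ = _ := by simp_rw [add_comm (1 / 2 : ℝ)]

theorem Antitone.midpoint_sum_le_integral (hf : Antitone f) (hδ : 0 < δ) (N : ℕ) :
    δ * ∑ k ∈ range N, f ((k + 1 / 2) * δ) ≤ ∫ x in -(δ / 2)..(N - 1 / 2) * δ, f x := by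
  have hg : Antitone fun u => f (u * δ) := hf.comp_monotone (monotone_mul_right_of_nonneg hδ.le)
  have h := (hg.antitoneOn (Icc (-(1 / 2)) (-(1 / 2) + N))).sum_le_integral
  rw [integral_comp_mul_right f hδ.ne', smul_eq_mul] at h
  calc δ * ∑ k ∈ range N, f ((k + 1 / 2) * δ)
      = δ * ∑ k ∈ range N, f ((-(1 / 2) + ↑(k + 1)) * δ) := by push_cast; ring_nf
    _ ≤ δ * (δ⁻¹ * ∫ x in -(1 / 2) * δ..(-(1 / 2) + N) * δ, f x) := by gcongr
    _ = _ := by rw [mul_inv_cancel_left₀ hδ.ne']; ring_nf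

theorem Antitone.integral_eq_of_eq_zero_of_le (hf : Antitone f) (hL : ∀ x, L ≤ x → f x = 0)
    (a : ℝ) {b : ℝ} (hb : L ≤ b) : ∫ x in a..b, f x = ∫ x in a..L, f x := by
  have htail : ∫ x in L..b, f x = 0 := by
    rw [integral_congr (g := fun _ => 0) fun x hx => hL x (uIcc_of_le hb ▸ hx).1]
    simp
  rw [← integral_add_adjacent_intervals hf.intervalIntegrable hf.intervalIntegrable, htail,
    add_zero]

theorem Antitone.midpoint_tsum_mem_Icc (hf : Antitone f) (hL : ∀ x, L ≤ x → f x = 0)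
    (hδ : 0 < δ) :
    δ * ∑' k : ℕ, f ((k + 1 / 2) * δ) ∈ Icc (∫ x in δ / 2..L, f x) (∫ x in -(δ / 2)..L, f x) := by
  obtain ⟨N, hN⟩ := exists_nat_ge (L / δ + 1)
  have hNδ : L + δ ≤ N * δ := by
    have := mul_le_mul_of_nonneg_right hN hδ.le
    rwa [add_mul, div_mul_cancel₀ _ hδ.ne', one_mul] at this
  have hsum : ∑' k : ℕ, f ((k + 1 / 2) * δ) = ∑ k ∈ range N, f ((k + 1 / 2) * δ) := by
    refine tsum_eq_sum fun k hk => hL _ ?_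
    have : (N : ℝ) ≤ k := by exact_mod_cast not_lt.1 (mem_range.not.1 hk)
    nlinarith
  rw [hsum]
  constructor
  · rw [← hf.integral_eq_of_eq_zero_of_le hL _ (b := (N + 1 / 2) * δ) (by nlinarith)]
    exact hf.integral_le_midpoint_sum hδ N
  · rw [← hf.integral_eq_of_eq_zero_of_le hL _ (b := (N - 1 / 2) * δ) (by nlinarith)]
    exact hf.midpoint_sum_le_integral hδ N

theorem Antitone.tendsto_midpoint_tsum (hf : Antitone f) (hL : ∀ x, L ≤ x → f x = 0) :
    Tendsto (fun δ => δ * ∑' k : ℕ, f ((k + 1 / 2) * δ)) (𝓝[>] 0) (𝓝 (∫ x in 0..L, f x)) := by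
  have hF : Continuous fun a => ∫ x in a..L, f x := by
    simp only [integral_symm L]
    exact (continuous_primitive (fun _ _ => hf.intervalIntegrable) L).neg
  have hlim : ∀ c : ℝ, Tendsto (fun δ => ∫ x in c * δ..L, f x) (𝓝[>] 0) (𝓝 (∫ x in 0..L, f x)) := by
    intro c
    have := (hF.comp (continuous_const_mul c)).tendsto 0
    simpa [Function.comp_def] using this.mono_left nhdsWithin_le_nhds
  refine tendsto_of_tendsto_of_tendsto_of_le_of_le' ?_ ?_
    (eventually_nhdsWithin_of_forall fun δ hδ => (hf.midpoint_tsum_mem_Icc hL hδ).1)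
    (eventually_nhdsWithin_of_forall fun δ hδ => (hf.midpoint_tsum_mem_Icc hL hδ).2)
  · simpa only [one_div_mul_eq_div] using hlim (1 / 2)
  · simpa only [neg_mul, one_div_mul_eq_div, neg_div] using hlim (-(1 / 2))

end MidpointSum

noncomputable def mmseProfile (s x : ℝ) : ℝ := (1 / s) * max 0 (1 - exp (2 * x) / s)

section MmseProfile

variable {s : ℝ}

theorem mmseProfile_antitone (hs : 0 < s) : Antitone (mmseProfile s) := fun x y hxy => by
  unfold mmseProfile
  gcongr

theorem mmseProfile_eq_zero (hs : 0 < s) {x : ℝ} (hx : log s / 2 ≤ x) : mmseProfile s x = 0 := by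
  have : s ≤ exp (2 * x) := by
    calc s = exp (log s) := (exp_log hs).symm
      _ ≤ exp (2 * x) := exp_le_exp.2 (by linarith)
  rw [mmseProfile, max_eq_left (by rwa [sub_nonpos, one_le_div hs]), mul_zero]

theorem integral_mmseProfile (hs : 1 ≤ s) :
    ∫ x in 0..log s / 2, mmseProfile s x = (1 / 2) * log s / s - (1 / (2 * s)) * (1 - 1 / s) := by
  have hs0 : 0 < s := by linarith
  have hL : 0 ≤ log s / 2 := by have := log_nonneg hs; positivity
  have hpos : EqOn (mmseProfile s) (fun x => (1 / s) * (1 - exp (2 * x) / s))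
      (uIcc 0 (log s / 2)) := by
    intro x hx
    rw [uIcc_of_le hL] at hx
    have : exp (2 * x) ≤ s := by
      calc exp (2 * x) ≤ exp (log s) := exp_le_exp.2 (by linarith [hx.2])
        _ = s := exp_log hs0
    rw [mmseProfile, max_eq_right (sub_nonneg.2 ((div_le_one hs0).2 this))]
  have hexp : IntervalIntegrable (fun x => exp (2 * x) / s) MeasureTheory.volume 0 (log s / 2) :=
    (by fun_prop : Continuous fun x => exp (2 * x) / s).intervalIntegrable _ _
  rw [integral_congr hpos, integral_const_mul, integral_sub intervalIntegrable_const hexp,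
    integral_div, integral_comp_mul_left exp two_ne_zero, integral_exp, integral_const,
    smul_eq_mul, mul_one, show 2 * (log s / 2) = log s by ring, exp_log hs0, mul_zero, exp_zero]
  field_simp
  ring

end MmseProfile

theorem mmse_per_dof (s : ℝ) (hs : 1 ≤ s) :
    Filter.Tendsto
      (fun δ : ℝ => δ * ∑' k : ℕ, (1 / s) * max 0 (1 - Real.exp ((2 * (k : ℝ) + 1) * δ) / s))
      (nhdsWithin 0 (Set.Ioi 0))
      (nhds ((1 / 2) * Real.log s / s - (1 / (2 * s)) * (1 - 1 / s))) := by
  have hs0 : 0 < s := by linarith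
  rw [← integral_mmseProfile hs]
  convert (mmseProfile_antitone hs0).tendsto_midpoint_tsum fun x => mmseProfile_eq_zero hs0
    using 5 with δ k
  rw [mmseProfile]
  ring_nf
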